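/- arXiv:1906.03476 — 8 statements merged into one kernel-verified Lean document; each statement's English description precedes it below -/
import Mathlib

section
/- If S is a semikernel of a digraph G and T ⊆ S, then S ∩ E*(T) is also a semikernel of G, where E* denotes the reflexive-transitive closure of the edge relation. -/
/-- Out-neighbours of a set `X` under edge relation `E`. -/
def outS {V : Type*} (E : V → V → Prop) (X : Set V) : Set V := {y | ∃ x ∈ X, E x y}

/-- In-neighbours of a set `X` under edge relation `E`. -/
def inS {V : Type*} (E : V → V → Prop) (X : Set V) : Set V := {y | ∃ x ∈ X, E y x}

/-- `K` is a kernel of the digraph `(G,E)`. -/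
def IsKernel {V : Type*} (G : Set V) (E : V → V → Prop) (K : Set V) : Prop :=
  K ⊆ G ∧ inS E K = G \ K

/-- `S` is a semikernel of the digraph `(G,E)`. -/
def IsSemikernel {V : Type*} (G : Set V) (E : V → V → Prop) (S : Set V) : Prop :=
  S ⊆ G ∧ outS E S ⊆ inS E S ∧ inS E S ⊆ G \ S

section

variable {V : Type*} {G : Set V} {E : V → V → Prop}

theorem inS_mono {X Y : Set V} (h : X ⊆ Y) : inS E X ⊆ inS E Y :=
  fun _ ⟨x, hx, hyx⟩ => ⟨x, h hx, hyx⟩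

theorem outS_setOf_reflTransGen_subset (T : Set V) :
    outS E {y | ∃ t ∈ T, Relation.ReflTransGen E t y} ⊆
      {y | ∃ t ∈ T, Relation.ReflTransGen E t y} :=
  fun _ ⟨_, ⟨t, ht, hreach⟩, hxy⟩ => ⟨t, ht, hreach.tail hxy⟩

theorem IsSemikernel.inter_of_outS_subset {S C : Set V} (hS : IsSemikernel G E S)
    (hC : outS E C ⊆ C) : IsSemikernel G E (S ∩ C) := by
  obtain ⟨hSG, hout, hin⟩ := hS
  refine ⟨Set.inter_subset_left.trans hSG, ?_, ?_⟩
  · rintro y ⟨x, ⟨hxS, hxC⟩, hxy⟩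
    obtain ⟨z, hzS, hyz⟩ := hout ⟨x, hxS, hxy⟩
    have hyC : y ∈ C := hC ⟨x, hxC, hxy⟩
    exact ⟨z, ⟨hzS, hC ⟨y, hyC, hyz⟩⟩, hyz⟩
  · calc inS E (S ∩ C) ⊆ inS E S := inS_mono Set.inter_subset_left
      _ ⊆ G \ S := hin
      _ ⊆ G \ (S ∩ C) := Set.sdiff_subset_sdiff_right Set.inter_subset_left

end

theorem stmt5_general {V : Type*} (G : Set V) (E : V → V → Prop) (S T : Set V)
    (hS : IsSemikernel G E S) :
    IsSemikernel G E (S ∩ {y | ∃ t ∈ T, Relation.ReflTransGen E t y}) :=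
  hS.inter_of_outS_subset (outS_setOf_reflTransGen_subset T)

theorem stmt5 {V : Type*} (G : Set V) (E : V → V → Prop) (S T : Set V)
    (hS : IsSemikernel G E S) (hT : T ⊆ S) :
    IsSemikernel G E (S ∩ {y | ∃ t ∈ T, Relation.ReflTransGen E t y}) :=
  stmt5_general G E S T hS
end

section
/- If S and T are semikernels of a digraph G and E⁻¹(S) ⊆ G \ T, then S ∪ T is a semikernel of G. -/
/-! The hypothesis `E⁻¹(S) ⊆ G \ T` forbids edges from `S` into `T`, because
`E(S) ⊆ E⁻¹(S)`; hence `E⁻¹(T)` also avoids `S`, and both independence conditions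
of a semikernel pass to `S ∪ T`. -/

section Neighbours

variable {V : Type*} (E : V → V → Prop) (S T : Set V)

theorem outS_union : outS E (S ∪ T) = outS E S ∪ outS E T := by
  ext y
  simp only [outS, Set.mem_union, Set.mem_ofPred_eq]
  constructor
  · rintro ⟨x, hx | hx, hxy⟩
    exacts [Or.inl ⟨x, hx, hxy⟩, Or.inr ⟨x, hx, hxy⟩]
  · rintro (⟨x, hx, hxy⟩ | ⟨x, hx, hxy⟩)
    exacts [⟨x, Or.inl hx, hxy⟩, ⟨x, Or.inr hx, hxy⟩]

theorem inS_union : inS E (S ∪ T) = inS E S ∪ inS E T :=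
  outS_union (flip E) S T

theorem disjoint_outS_iff_disjoint_inS : Disjoint (outS E S) T ↔ Disjoint S (inS E T) := by
  simp only [Set.disjoint_left, outS, inS, Set.mem_ofPred_eq]
  constructor
  · rintro hST y hy ⟨x, hx, hyx⟩
    exact hST ⟨y, hy, hyx⟩ hx
  · rintro hST x ⟨y, hy, hyx⟩ hx
    exact hST hy ⟨x, hx, hyx⟩

end Neighbours

theorem stmt6 {V : Type*} (G : Set V) (E : V → V → Prop) (S T : Set V)
    (hS : IsSemikernel G E S) (hT : IsSemikernel G E T)
    (h : inS E S ⊆ G \ T) :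
    IsSemikernel G E (S ∪ T) := by
  obtain ⟨hSG, hSout, hSin⟩ := hS
  obtain ⟨hTG, hTout, hTin⟩ := hT
  have hTS : Disjoint (inS E T) S :=
    ((disjoint_outS_iff_disjoint_inS E S T).1 (Set.subset_sdiff.1 (hSout.trans h)).2).symm
  refine ⟨Set.union_subset hSG hTG, ?_, ?_⟩
  · rw [outS_union, inS_union]
    exact Set.union_subset_union hSout hTout
  · rw [inS_union, ← Set.sdiff_inter_sdiff]
    exact Set.union_subset (Set.subset_inter hSin h)
      (Set.subset_inter (Set.subset_sdiff.2 ⟨hTin.trans Set.sdiff_subset, hTS⟩) hTin)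
end

section
/- If a digraph G has a kernel, then the models Mod(G) (maximal E⁻¹-closed semikernels) are exactly the kernels of G. -/
/-!
A kernel `K` has `K ∪ E⁻¹(K) = G`, the largest value `S ∪ E⁻¹(S)` can take for a semikernel `S`.
So once a kernel exists, the maximal `E⁻¹`-closed semikernels are exactly the semikernels with
`S ∪ E⁻¹(S) = G`, and those are precisely the kernels.
-/

section Kernels

variable {V : Type*} {G : Set V} {E : V → V → Prop}

theorem inS_subset_of_edges (hE : ∀ x y, E x y → x ∈ G ∧ y ∈ G) (X : Set V) :
    inS E X ⊆ G := by
  rintro y ⟨x, -, hyx⟩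
  exact (hE y x hyx).1

theorem IsSemikernel.union_inS_subset {S : Set V} (hS : IsSemikernel G E S) :
    S ∪ inS E S ⊆ G :=
  Set.union_subset hS.1 (hS.2.2.trans Set.sdiff_subset)

theorem IsKernel.union_inS_eq {K : Set V} (hK : IsKernel G E K) : K ∪ inS E K = G := by
  rw [hK.2]
  exact Set.union_sdiff_cancel hK.1

theorem IsKernel.isSemikernel (hE : ∀ x y, E x y → x ∈ G ∧ y ∈ G) {K : Set V}
    (hK : IsKernel G E K) : IsSemikernel G E K := by
  refine ⟨hK.1, ?_, hK.2.le⟩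
  rintro y ⟨x, hxK, hxy⟩
  rw [hK.2]
  refine ⟨(hE x y hxy).2, fun hyK => ?_⟩
  have hx : x ∈ inS E K := ⟨y, hyK, hxy⟩
  rw [hK.2] at hx
  exact hx.2 hxK

theorem IsKernel.inS_union_inS_subset (hE : ∀ x y, E x y → x ∈ G ∧ y ∈ G) {K : Set V}
    (hK : IsKernel G E K) : inS E (K ∪ inS E K) ⊆ K ∪ inS E K := by
  rw [hK.union_inS_eq]
  exact inS_subset_of_edges hE G

theorem IsSemikernel.isKernel_of_union_inS_eq {S : Set V} (hS : IsSemikernel G E S)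
    (hSG : S ∪ inS E S = G) : IsKernel G E S := by
  refine ⟨hS.1, hS.2.2.antisymm fun y ⟨hyG, hyS⟩ => ?_⟩
  rw [← hSG] at hyG
  exact hyG.resolve_left hyS

end Kernels

theorem stmt13 {V : Type*} (G : Set V) (E : V → V → Prop)
    (hE : ∀ x y, E x y → x ∈ G ∧ y ∈ G)
    (hker : ∃ K, IsKernel G E K) :
    {S | IsSemikernel G E S ∧ inS E (S ∪ inS E S) ⊆ S ∪ inS E S ∧
         ∀ T, IsSemikernel G E T → inS E (T ∪ inS E T) ⊆ T ∪ inS E T →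
           ¬ (S ∪ inS E S ⊂ T ∪ inS E T)} =
      {K | IsKernel G E K} := by
  ext S
  constructor
  · rintro ⟨hS, -, hmax⟩
    obtain ⟨K, hK⟩ := hker
    have hSG : S ∪ inS E S = G := by
      by_contra hne
      refine hmax K (hK.isSemikernel hE) (hK.inS_union_inS_subset hE) ?_
      rw [hK.union_inS_eq]
      exact hS.union_inS_subset.ssubset_of_ne hne
    exact hS.isKernel_of_union_inS_eq hSG
  · intro hS
    refine ⟨hS.isSemikernel hE, hS.inS_union_inS_subset hE, fun T hT _ hlt => ?_⟩
    rw [hS.union_inS_eq] at hlt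
    exact hT.union_inS_subset.not_ssubset hlt
end

section
/- (Cut-elimination under literal removal) Let Γ be a set of clauses over atoms G and X ⊆ G. If Γ ⊢ A by resolution and A ⊄⊆ literals over X, then there exists B ⊆ A \ (literals over X) with Γ⫽X ⊢ B, where Γ⫽X is obtained by deleting all literals over X from each clause of Γ and removing the empty clause if it arises. -/
/-- A clause over atoms `V`: positive atoms and negated atoms. -/
abbrev Clause (V : Type) := Finset V × Finset V

/-- Resolution derivability from a set of clauses `Γ`:
membership, the axioms `a ∨ ¬a`, and the resolution (cut) rule. -/
inductive Res {V : Type} [DecidableEq V] (Γ : Set (Clause V)) : Clause V → Prop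
  | mem {C : Clause V} : C ∈ Γ → Res Γ C
  | ax (a : V) : Res Γ ({a}, {a})
  | cut {A₁ B₁ A₂ B₂ : Finset V} (a : V) :
      Res Γ (insert a A₁, B₁) → Res Γ (A₂, insert a B₂) → Res Γ (A₁ ∪ A₂, B₁ ∪ B₂)

/-- Satisfaction of a clause by a 3-partition `(t,f,p)` of the atoms. -/
def Sat {V : Type} (t f p : Set V) (C : Clause V) : Prop :=
  (∃ a ∈ C.1, a ∈ t) ∨ (∃ b ∈ C.2, b ∈ f) ∨
    ((∀ a ∈ C.1, a ∈ p) ∧ (∀ b ∈ C.2, b ∈ p) ∧ p.Nonempty)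

/-!
Induction on the derivation. An input clause `C` is replaced by `C \ X`, an axiom `{a, ¬a}` with
`a ∉ X` is kept, and a cut on `a` is replayed on the residual clauses when both still contain
the literal `a`; otherwise one residual premise already subsumes the residual conclusion. A premise
lying entirely over `X` forces `a ∈ X`, so it can only meet a residual premise that has lost `a`.
-/

section

variable {V : Type} [DecidableEq V]

namespace Clause

def removeAtoms (X : Finset V) (C : Clause V) : Clause V := (C.1 \ X, C.2 \ X)

lemma removeAtoms_eq_empty_iff {X : Finset V} {C : Clause V} :
    C.removeAtoms X = (∅, ∅) ↔ C.1 ⊆ X ∧ C.2 ⊆ X := by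
  simp only [removeAtoms, Prod.ext_iff, Finset.sdiff_eq_empty_iff_subset]

end Clause

def removeAtoms (Γ : Set (Clause V)) (X : Finset V) : Set (Clause V) :=
  {D | ∃ C ∈ Γ, D = C.removeAtoms X ∧ D ≠ (∅, ∅)}

lemma Finset.erase_subset_sdiff_of_subset_insert_sdiff {s t X : Finset V} {a : V}
    (h : s ⊆ insert a t \ X) : s.erase a ⊆ t \ X := by
  intro x hx
  have hxs := h (Finset.mem_of_mem_erase hx)
  simp only [Finset.mem_sdiff, Finset.mem_insert] at hxs ⊢
  exact ⟨hxs.1.resolve_left (Finset.ne_of_mem_erase hx), hxs.2⟩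

lemma Res.cut_erase {Γ : Set (Clause V)} {C D : Clause V} {a : V} (hC : Res Γ C) (hD : Res Γ D)
    (haC : a ∈ C.1) (haD : a ∈ D.2) : Res Γ (C.1.erase a ∪ D.1, C.2 ∪ D.2.erase a) := by
  have hC' : Res Γ (insert a (C.1.erase a), C.2) := by rwa [Finset.insert_erase haC]
  have hD' : Res Γ (D.1, insert a (D.2.erase a)) := by rwa [Finset.insert_erase haD]
  exact Res.cut a hC' hD'

def DerivesSubclauseOff (Δ : Set (Clause V)) (X : Finset V) (A : Clause V) : Prop :=
  ∃ B : Clause V, B.1 ⊆ A.1 \ X ∧ B.2 ⊆ A.2 \ X ∧ Res Δ B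

lemma DerivesSubclauseOff.cut {Δ : Set (Clause V)} {X A₁ B₁ A₂ B₂ : Finset V} {a : V}
    (h₁ : (insert a A₁ ⊆ X ∧ B₁ ⊆ X) ∨ DerivesSubclauseOff Δ X (insert a A₁, B₁))
    (h₂ : (A₂ ⊆ X ∧ insert a B₂ ⊆ X) ∨ DerivesSubclauseOff Δ X (A₂, insert a B₂)) :
    (A₁ ∪ A₂ ⊆ X ∧ B₁ ∪ B₂ ⊆ X) ∨ DerivesSubclauseOff Δ X (A₁ ∪ A₂, B₁ ∪ B₂) := by
  have left {C : Clause V} (h₁ : C.1 ⊆ insert a A₁ \ X) (h₂ : C.2 ⊆ B₁ \ X) :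
      C.1.erase a ⊆ (A₁ ∪ A₂) \ X ∧ C.2 ⊆ (B₁ ∪ B₂) \ X :=
    ⟨(Finset.erase_subset_sdiff_of_subset_insert_sdiff h₁).trans
        (sdiff_le_sdiff_right le_sup_left),
      h₂.trans (sdiff_le_sdiff_right le_sup_left)⟩
  have right {C : Clause V} (h₁ : C.1 ⊆ A₂ \ X) (h₂ : C.2 ⊆ insert a B₂ \ X) :
      C.1 ⊆ (A₁ ∪ A₂) \ X ∧ C.2.erase a ⊆ (B₁ ∪ B₂) \ X :=
    ⟨h₁.trans (sdiff_le_sdiff_right le_sup_right),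
      (Finset.erase_subset_sdiff_of_subset_insert_sdiff h₂).trans
        (sdiff_le_sdiff_right le_sup_right)⟩
  rcases h₁ with ⟨hA₁, hB₁⟩ | ⟨C, hC₁, hC₂, hC⟩
  · have haX : a ∈ X := hA₁ (Finset.mem_insert_self a A₁)
    rcases h₂ with ⟨hA₂, hB₂⟩ | ⟨D, hD₁, hD₂, hD⟩
    · exact Or.inl ⟨Finset.union_subset ((Finset.subset_insert a A₁).trans hA₁) hA₂,
        Finset.union_subset hB₁ ((Finset.subset_insert a B₂).trans hB₂)⟩
    · have haD : a ∉ D.2 := fun h => (Finset.mem_sdiff.mp (hD₂ h)).2 haX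
      obtain ⟨hD₁', hD₂'⟩ := right hD₁ hD₂
      exact Or.inr ⟨D, hD₁', Finset.erase_eq_of_notMem haD ▸ hD₂', hD⟩
  by_cases haC : a ∈ C.1
  swap
  · obtain ⟨hC₁', hC₂'⟩ := left hC₁ hC₂
    exact Or.inr ⟨C, Finset.erase_eq_of_notMem haC ▸ hC₁', hC₂', hC⟩
  have haX : a ∉ X := (Finset.mem_sdiff.mp (hC₁ haC)).2
  rcases h₂ with ⟨_, hB₂⟩ | ⟨D, hD₁, hD₂, hD⟩
  · exact absurd (hB₂ (Finset.mem_insert_self a B₂)) haX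
  obtain ⟨hD₁', hD₂'⟩ := right hD₁ hD₂
  by_cases haD : a ∈ D.2
  · obtain ⟨hC₁', hC₂'⟩ := left hC₁ hC₂
    exact Or.inr ⟨_, Finset.union_subset hC₁' hD₁', Finset.union_subset hC₂' hD₂',
      hC.cut_erase hD haC haD⟩
  · exact Or.inr ⟨D, hD₁', Finset.erase_eq_of_notMem haD ▸ hD₂', hD⟩

theorem Res.subset_or_derivesSubclauseOff_removeAtoms {Γ : Set (Clause V)} {A : Clause V}
    (X : Finset V) (hA : Res Γ A) :
    (A.1 ⊆ X ∧ A.2 ⊆ X) ∨ DerivesSubclauseOff (removeAtoms Γ X) X A := by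
  induction hA with
  | @mem C hC =>
    by_cases hCX : C.1 ⊆ X ∧ C.2 ⊆ X
    · exact Or.inl hCX
    · exact Or.inr ⟨C.removeAtoms X, subset_rfl, subset_rfl,
        Res.mem ⟨C, hC, rfl, Clause.removeAtoms_eq_empty_iff.not.mpr hCX⟩⟩
  | ax a =>
    by_cases ha : a ∈ X
    · simp only [Finset.singleton_subset_iff, ha, and_self, true_or]
    · exact Or.inr ⟨({a}, {a}), by simp [ha], by simp [ha], Res.ax a⟩
  | cut _ _ _ ih₁ ih₂ => exact DerivesSubclauseOff.cut ih₁ ih₂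
end

theorem stmt15 {V : Type} [DecidableEq V] (Γ : Set (Clause V))
    (X : Finset V) (A : Clause V)
    (hA : Res Γ A) (hnot : ¬ (A.1 ⊆ X ∧ A.2 ⊆ X)) :
    ∃ B : Clause V, B.1 ⊆ A.1 \ X ∧ B.2 ⊆ A.2 \ X ∧
      Res ({D | ∃ C ∈ Γ, D = (C.1 \ X, C.2 \ X) ∧ D ≠ ((∅ : Finset V), (∅ : Finset V))}) B :=
  (hA.subset_or_derivesSubclauseOff_removeAtoms X).resolve_left hnot
end

section
/- If Γ proves both x and ¬x by resolution, where Γ is the clausal theory of a digraph G and x a vertex with out-neighborhood E(x), then Γ proves both y and ¬y for every out-neighbor y ∈ E(x). -/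
namespace Res

variable {V : Type} [DecidableEq V] {Γ : Set (Clause V)}

theorem cut_negUnit {A B : Finset V} {a : V} (h : Res Γ (insert a A, B))
    (ha : Res Γ (∅, {a})) : Res Γ (A, B) := by
  simpa using Res.cut a h (A₂ := ∅) (B₂ := ∅) (by simpa using ha)

theorem cut_posUnit {A B : Finset V} {a : V} (h : Res Γ (A, insert a B))
    (ha : Res Γ ({a}, ∅)) : Res Γ (A, B) := by
  simpa using Res.cut a (A₁ := ∅) (B₁ := ∅) (by simpa using ha) h

theorem cut_negUnits {A B : Finset V} (S : Finset V) (h : Res Γ (S ∪ A, B))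
    (hS : ∀ z ∈ S, Res Γ (∅, {z})) : Res Γ (A, B) := by
  induction S using Finset.induction_on with
  | empty => simpa using h
  | insert z S _ ih =>
    rw [Finset.insert_union] at h
    exact ih (cut_negUnit h (hS z (Finset.mem_insert_self z S)))
      fun w hw => hS w (Finset.mem_insert_of_mem hw)

end Res

theorem stmt16 {V : Type} [DecidableEq V] (Eout : V → Finset V)
    (Γ : Set (Clause V))
    (hΓ : Γ = {C | ∃ x, C = (insert x (Eout x), ∅)} ∪
              {C | ∃ x y, y ∈ Eout x ∧ C = (∅, insert x {y})})
    (x : V) (hx : Res Γ ({x}, ∅)) (hnx : Res Γ (∅, {x})) :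
    ∀ y ∈ Eout x, Res Γ ({y}, ∅) ∧ Res Γ (∅, {y}) := by
  have hneg : ∀ z ∈ Eout x, Res Γ (∅, {z}) := fun z hz =>
    (Res.mem (by rw [hΓ]; exact Or.inr ⟨x, z, hz, rfl⟩)).cut_posUnit hx
  have hpos : Res Γ (Eout x, ∅) :=
    (Res.mem (by rw [hΓ]; exact Or.inl ⟨x, rfl⟩)).cut_negUnit hnx
  intro y hy
  have hsplit : (Eout x).erase y ∪ {y} = Eout x := by
    rw [Finset.union_singleton, Finset.insert_erase hy]
  refine ⟨Res.cut_negUnits ((Eout x).erase y) (hsplit.symm ▸ hpos) ?_, hneg y hy⟩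
  exact fun z hz => hneg z (Finset.mem_of_mem_erase hz)
end

section
/- Deduction theorem for resolution: if Γ ∪ {x} ⊢ y and Γ ⊬ y, then Γ ⊢ {¬x, y}. More generally, the resolution closure satisfies RES(Γ ∪ A⁻) = RES(Γ) ∪ A⁻ ∪ {P \ B | Γ ⊢ P, B ⊆ A}, where A⁻ is the set of unit clauses with literals complementary to those of clause A. -/
/-!
Every clause `C` derivable from `Γ ∪ A⁻` has a subclause `D` of `A` such that `C ∨ D` is derivable
from `Γ`: a unit of `A⁻` is the axiom `{a, ¬a}` with the literal of `A` moved into `D`, and a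
resolution step on a literal of `C` just carries the extra literals of both premises along.
Conversely the units of `A⁻` resolve away any subclause `B ⊆ A` of a clause derivable from `Γ`.
The deduction theorem is the case `A = {¬x}`: then `D` is `∅` or `{¬x}`.
-/

theorem sup_sdiff_sdiff_eq_left {α : Type*} [GeneralizedBooleanAlgebra α] (a b : α) :
    (a ⊔ b) \ (b \ a) = a := by
  rw [sup_sdiff, disjoint_sdiff_self_right.sdiff_eq_left, sdiff_sdiff_right_self, inf_comm,
    sup_inf_self]

namespace Clause

variable {V : Type}

/-- The set `A⁻` of unit clauses complementary to the literals of `A`. -/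
def complUnits (A : Clause V) : Set (Clause V) :=
  {D | ∃ a ∈ A.1, D = (∅, {a})} ∪ {D | ∃ b ∈ A.2, D = ({b}, ∅)}

end Clause

namespace Res

variable {V : Type} [DecidableEq V] {Γ : Set (Clause V)}

theorem mono {Δ : Set (Clause V)} (h : Γ ⊆ Δ) {C : Clause V} (hC : Res Γ C) : Res Δ C := by
  induction hC with
  | mem hC => exact mem (h hC)
  | ax a => exact ax a
  | cut a _ _ ih₁ ih₂ => exact cut a ih₁ ih₂

theorem erase_fst {X Y : Finset V} {a : V} (h : Res Γ (X, Y)) (ha : (∅, {a}) ∈ Γ) :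
    Res Γ (X.erase a, Y) := by
  by_cases haX : a ∈ X
  · rw [← Finset.insert_erase haX] at h
    simpa using cut (A₂ := ∅) (B₂ := ∅) a h (by simpa using mem ha)
  · rwa [Finset.erase_eq_of_notMem haX]

theorem erase_snd {X Y : Finset V} {a : V} (h : Res Γ (X, Y)) (ha : ({a}, ∅) ∈ Γ) :
    Res Γ (X, Y.erase a) := by
  by_cases haY : a ∈ Y
  · rw [← Finset.insert_erase haY] at h
    simpa using cut (A₁ := ∅) (B₁ := ∅) a (by simpa using mem ha) h
  · rwa [Finset.erase_eq_of_notMem haY]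

theorem sdiff_fst {X Y S : Finset V} (h : Res Γ (X, Y)) (hS : ∀ a ∈ S, (∅, {a}) ∈ Γ) :
    Res Γ (X \ S, Y) := by
  induction S using Finset.induction_on with
  | empty => simpa
  | insert a S _ ih =>
    rw [Finset.sdiff_insert]
    exact (ih fun b hb ↦ hS b (Finset.mem_insert_of_mem hb)).erase_fst
      (hS a (Finset.mem_insert_self a S))

theorem sdiff_snd {X Y T : Finset V} (h : Res Γ (X, Y)) (hT : ∀ b ∈ T, ({b}, ∅) ∈ Γ) :
    Res Γ (X, Y \ T) := by
  induction T using Finset.induction_on with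
  | empty => simpa
  | insert b T _ ih =>
    rw [Finset.sdiff_insert]
    exact (ih fun c hc ↦ hT c (Finset.mem_insert_of_mem hc)).erase_snd
      (hT b (Finset.mem_insert_self b T))

theorem sdiff_of_le_complUnits {A B P : Clause V} (hP : Res Γ P) (hB : B ≤ A) :
    Res (Γ ∪ A.complUnits) (P \ B) :=
  ((hP.mono Set.subset_union_left).sdiff_fst fun a ha ↦ .inr (.inl ⟨a, hB.1 ha, rfl⟩)).sdiff_snd
    fun b hb ↦ .inr (.inr ⟨b, hB.2 hb, rfl⟩)

theorem cut_sup {A₁ B₁ A₂ B₂ : Finset V} {D₁ D₂ : Clause V} (a : V)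
    (h₁ : Res Γ ((insert a A₁, B₁) ⊔ D₁)) (h₂ : Res Γ ((A₂, insert a B₂) ⊔ D₂)) :
    Res Γ ((A₁ ∪ A₂, B₁ ∪ B₂) ⊔ (D₁ ⊔ D₂)) := by
  obtain ⟨X₁, Y₁⟩ := D₁
  obtain ⟨X₂, Y₂⟩ := D₂
  simp only [Prod.mk_sup_mk, Finset.sup_eq_union, Finset.insert_union] at h₁ h₂
  simpa only [Prod.mk_sup_mk, Finset.sup_eq_union, Finset.union_union_union_comm] using cut a h₁ h₂

theorem exists_le_sup_of_union_complUnits {A C : Clause V} (h : Res (Γ ∪ A.complUnits) C) :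
    ∃ D ≤ A, Res Γ (C ⊔ D) := by
  induction h with
  | mem hC =>
    rcases hC with hC | ⟨a, ha, rfl⟩ | ⟨b, hb, rfl⟩
    · exact ⟨⊥, bot_le, by simpa using mem hC⟩
    · exact ⟨({a}, ∅), by simpa [Prod.le_def] using ha, by simpa using ax a⟩
    · exact ⟨(∅, {b}), by simpa [Prod.le_def] using hb, by simpa using ax b⟩
  | ax a => exact ⟨⊥, bot_le, by simpa using ax a⟩
  | cut a _ _ ih₁ ih₂ =>
    obtain ⟨D₁, hD₁, h₁⟩ := ih₁
    obtain ⟨D₂, hD₂, h₂⟩ := ih₂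
    exact ⟨D₁ ⊔ D₂, sup_le hD₁ hD₂, cut_sup a h₁ h₂⟩

theorem setOf_union_complUnits (Γ : Set (Clause V)) (A : Clause V) :
    {C | Res (Γ ∪ A.complUnits) C} =
      {C | Res Γ C} ∪ A.complUnits ∪ {C | ∃ P B, Res Γ P ∧ B ≤ A ∧ C = P \ B} := by
  ext C
  constructor
  · intro h
    obtain ⟨D, hD, hCD⟩ := exists_le_sup_of_union_complUnits h
    exact .inr ⟨C ⊔ D, D \ C, hCD, sdiff_le.trans hD, (sup_sdiff_sdiff_eq_left C D).symm⟩
  · rintro ((h | h) | ⟨P, B, hP, hB, rfl⟩)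
    · exact h.mono Set.subset_union_left
    · exact mem (.inr h)
    · exact sdiff_of_le_complUnits hP hB

theorem of_union_unit {x : V} {C : Clause V} (h : Res (Γ ∪ {({x}, ∅)}) C) :
    Res Γ C ∨ Res Γ (C.1, insert x C.2) := by
  have hΓ : Γ ∪ {({x}, ∅)} ⊆ Γ ∪ Clause.complUnits (∅, {x}) :=
    Set.union_subset_union_right Γ (by simp [Clause.complUnits])
  obtain ⟨⟨D₁, D₂⟩, hD, hCD⟩ := exists_le_sup_of_union_complUnits (h.mono hΓ)
  obtain ⟨hD₁, hD₂⟩ := Prod.mk_le_mk.1 hD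
  obtain rfl := Finset.subset_empty.1 hD₁
  rcases Finset.subset_singleton_iff.1 hD₂ with rfl | rfl
  · exact .inl (by simpa [Prod.sup_def] using hCD)
  · exact .inr (by simpa [Prod.sup_def, Finset.union_singleton] using hCD)

end Res

theorem stmt17 {V : Type} [DecidableEq V] :
    (∀ (Γ : Set (Clause V)) (x y : V),
      Res (Γ ∪ {(({x} : Finset V), (∅ : Finset V))}) ({y}, ∅) →
      ¬ Res Γ ({y}, ∅) → Res Γ ({y}, {x})) ∧
    (∀ (Γ : Set (Clause V)) (A : Clause V),
      {C | Res (Γ ∪ ({D | ∃ a ∈ A.1, D = ((∅ : Finset V), ({a} : Finset V))} ∪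
                     {D | ∃ b ∈ A.2, D = (({b} : Finset V), (∅ : Finset V))})) C} =
        {C | Res Γ C} ∪
        ({D | ∃ a ∈ A.1, D = ((∅ : Finset V), ({a} : Finset V))} ∪
         {D | ∃ b ∈ A.2, D = (({b} : Finset V), (∅ : Finset V))}) ∪
        {C | ∃ P : Clause V, ∃ B : Clause V, Res Γ P ∧ B.1 ⊆ A.1 ∧ B.2 ⊆ A.2 ∧
              C = (P.1 \ B.1, P.2 \ B.2)}) := by
  refine ⟨fun Γ x y h hy ↦ ?_, fun Γ A ↦ ?_⟩
  · simpa using (Res.of_union_unit h).resolve_left hy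
  · have h := Res.setOf_union_complUnits Γ A
    simp only [Prod.le_def, and_assoc] at h
    exact h
end

section
/- For an E⁻¹-closed semikernel S of the digraph G of a theory Γ in graph normal form, the 3-partition (S, E⁻¹(S), G \ E⁻¹[S]) satisfies every clause of the clausal theory of G, i.e., every positive clause {x} ∪ E(x) and every negative clause {¬x, ¬y} for y ∈ E(x). -/
/-!
The vertices that are neither true (in `S`) nor false (in `E⁻¹(S)`) form the complement of
`S ∪ E⁻¹(S)`, which is closed under successors because `S ∪ E⁻¹(S)` is closed under predecessors.
So a positive clause `{x} ∪ E(x)` is either made true by `x` or by a successor in `S`, or lies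
entirely in the undetermined part. A negative clause `{¬x, ¬y}` is made true by `x ∈ E⁻¹(S)`,
by `y ∈ E(S) ⊆ E⁻¹(S)` when `x ∈ S`, and otherwise lies in the undetermined part.
-/

section Clauses

variable {V : Type} {t f p : Set V} {C : Clause V}

theorem sat_of_mem_fst {a : V} (ha : a ∈ C.1) (ht : a ∈ t) : Sat t f p C :=
  Or.inl ⟨a, ha, ht⟩

theorem sat_of_mem_snd {b : V} (hb : b ∈ C.2) (hf : b ∈ f) : Sat t f p C :=
  Or.inr (Or.inl ⟨b, hb, hf⟩)

theorem sat_of_forall_mem (h₁ : ∀ a ∈ C.1, a ∈ p) (h₂ : ∀ b ∈ C.2, b ∈ p) (hp : p.Nonempty) :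
    Sat t f p C :=
  Or.inr (Or.inr ⟨h₁, h₂, hp⟩)

end Clauses

section Semikernel

variable {V : Type} (Eout : V → Finset V)

def successors (S : Set V) : Set V := {y | ∃ x ∈ S, y ∈ Eout x}

def predecessors (S : Set V) : Set V := {y | ∃ x ∈ S, x ∈ Eout y}

variable {Eout}

theorem notMem_of_predecessors_subset {T : Set V} (hT : predecessors Eout T ⊆ T) {x y : V}
    (hx : x ∉ T) (hy : y ∈ Eout x) : y ∉ T :=
  fun hyT => hx (hT ⟨y, hyT, hy⟩)

variable [DecidableEq V] {S : Set V}

theorem sat_positive_clause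
    (hcl : predecessors Eout (S ∪ predecessors Eout S) ⊆ S ∪ predecessors Eout S) (x : V) :
    Sat S (predecessors Eout S) (Set.univ \ (S ∪ predecessors Eout S)) (insert x (Eout x), ∅) := by
  by_cases hxS : x ∈ S
  · exact sat_of_mem_fst (Finset.mem_insert_self x _) hxS
  by_cases hxF : x ∈ predecessors Eout S
  · obtain ⟨s, hs, hxs⟩ := hxF
    exact sat_of_mem_fst (Finset.mem_insert_of_mem hxs) hs
  have hx : x ∉ S ∪ predecessors Eout S := fun h => h.elim hxS hxF
  refine sat_of_forall_mem (fun a ha => ?_) (by simp) ⟨x, trivial, hx⟩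
  rcases Finset.mem_insert.mp ha with rfl | ha
  · exact ⟨trivial, hx⟩
  · exact ⟨trivial, notMem_of_predecessors_subset hcl hx ha⟩

theorem sat_negative_clause
    (hcl : predecessors Eout (S ∪ predecessors Eout S) ⊆ S ∪ predecessors Eout S)
    (hsucc : successors Eout S ⊆ predecessors Eout S) {x y : V}
    (hxy : y ∈ Eout x) :
    Sat S (predecessors Eout S) (Set.univ \ (S ∪ predecessors Eout S)) (∅, insert x {y}) := by
  by_cases hxS : x ∈ S
  · exact sat_of_mem_snd (by simp) (hsucc ⟨x, hxS, hxy⟩)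
  by_cases hxF : x ∈ predecessors Eout S
  · exact sat_of_mem_snd (Finset.mem_insert_self x _) hxF
  have hx : x ∉ S ∪ predecessors Eout S := fun h => h.elim hxS hxF
  have hy : y ∉ S ∪ predecessors Eout S := notMem_of_predecessors_subset hcl hx hxy
  refine sat_of_forall_mem (by simp) (fun b hb => ?_) ⟨x, trivial, hx⟩
  rcases Finset.mem_insert.mp hb with rfl | hb
  · exact ⟨trivial, hx⟩
  · rw [Finset.mem_singleton.mp hb]
    exact ⟨trivial, hy⟩

end Semikernel

theorem stmt18 {V : Type} [DecidableEq V] (Eout : V → Finset V) (S : Set V)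
    (hsemi : {y | ∃ x ∈ S, y ∈ Eout x} ⊆ {y | ∃ x ∈ S, x ∈ Eout y} ∧
             {y | ∃ x ∈ S, x ∈ Eout y} ⊆ Sᶜ)
    (hcl : {y | ∃ x ∈ S ∪ {y | ∃ x ∈ S, x ∈ Eout y}, x ∈ Eout y} ⊆
             S ∪ {y | ∃ x ∈ S, x ∈ Eout y}) :
    (∀ x : V, Sat S {y | ∃ x ∈ S, x ∈ Eout y}
        (Set.univ \ (S ∪ {y | ∃ x ∈ S, x ∈ Eout y})) (insert x (Eout x), ∅)) ∧
    (∀ x y : V, y ∈ Eout x →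
      Sat S {y | ∃ x ∈ S, x ∈ Eout y}
        (Set.univ \ (S ∪ {y | ∃ x ∈ S, x ∈ Eout y})) (∅, insert x {y})) :=
  ⟨sat_positive_clause hcl, fun _ _ => sat_negative_clause hcl hsemi.1⟩
end

section
/- Distinct strong components of the underlying undirected graph of a digraph have disjoint provable clauses: if x and y are atoms occurring (possibly negated) in a single resolution-provable clause from the clausal theory of digraph G, then x and y are connected by a path in the underlying undirected graph of G. -/
theorem stmt19 {V : Type} [DecidableEq V] (Eout : V → Finset V)
    (Γ : Set (Clause V))
    (hΓ : Γ = {C | ∃ x, C = (insert x (Eout x), ∅)} ∪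
              {C | ∃ x y, y ∈ Eout x ∧ C = (∅, insert x {y})})
    (C : Clause V) (hC : Res Γ C) (x y : V)
    (hx : x ∈ C.1 ∪ C.2) (hy : y ∈ C.1 ∪ C.2) :
    Relation.ReflTransGen (fun a b => b ∈ Eout a ∨ a ∈ Eout b) x y := by
  subst hΓ
  set R := Relation.ReflTransGen (fun a b => b ∈ Eout a ∨ a ∈ Eout b) with hR
  have hsymm : ∀ {a b}, R a b → R b a := by
    intro a b h
    haveI : Std.Symm (fun a b : V => b ∈ Eout a ∨ a ∈ Eout b) := ⟨fun u v h => h.symm⟩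
    exact Std.Symm.symm _ _ h
  induction hC generalizing x y with
  | mem h =>
    rcases h with ⟨z, rfl⟩ | ⟨u, v, huv, rfl⟩
    · simp only [Finset.union_empty, Finset.mem_insert] at hx hy
      have key : ∀ w, w = z ∨ w ∈ Eout z → R w z := by
        rintro w (rfl | hw)
        · exact Relation.ReflTransGen.refl
        · exact Relation.ReflTransGen.single (Or.inr hw)
      exact (key x hx).trans (hsymm (key y hy))
    · simp only [Finset.empty_union, Finset.mem_insert, Finset.mem_singleton] at hx hy
      have key : ∀ w, w = u ∨ w = v → R w u := by
        rintro w (rfl | rfl)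
        · exact Relation.ReflTransGen.refl
        · exact Relation.ReflTransGen.single (Or.inr huv)
      exact (key x hx).trans (hsymm (key y hy))
  | ax a =>
    simp only [Finset.mem_union, Finset.mem_singleton] at hx hy
    have hxa : x = a := by tauto
    have hya : y = a := by tauto
    subst hxa; subst hya; exact Relation.ReflTransGen.refl
  | @cut A₁ B₁ A₂ B₂ a h1 h2 ih1 ih2 =>
    have key : ∀ w, w ∈ (A₁ ∪ A₂) ∪ (B₁ ∪ B₂) → R w a := by
      intro w hw
      simp only [Finset.mem_union] at hw
      rcases hw with (hw | hw) | (hw | hw)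
      · exact ih1 w a (by simp [hw]) (by simp)
      · exact ih2 w a (by simp [hw]) (by simp)
      · exact ih1 w a (by simp [hw]) (by simp)
      · exact ih2 w a (by simp [hw]) (by simp)
    exact (key x hx).trans (hsymm (key y hy))
end
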